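/- arXiv:1605.06651 — 2 statements merged into one kernel-verified Lean document; each statement's English description precedes it below -/
import Mathlib

section
/- Let G ≥ 2, r > 0, r ≠ 1, and p^F ∈ [0,1]. For 1 ≤ s ≤ G-1 define V1(s) = p^F + (1-p^F)·(1-r^{s-1})/(1-r^{G-1}) and V0(s) = (1-r^s)/(1-r^G). Then |V1(s) - V0(s)| = ((r^{G-1} - r^{s-1})/(r^{G-1} - 1)) · |p^F - (1-r)/(1-r^G)|. -/
lemma div_pow_sub_pow_sub_one_nonneg {r : ℝ} (hr : 0 ≤ r) {a n : ℕ} (han : a ≤ n) :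
    0 ≤ (r ^ n - r ^ a) / (r ^ n - 1) := by
  rcases le_total r 1 with h | h
  · exact div_nonneg_of_nonpos (sub_nonpos.2 (pow_le_pow_of_le_one hr h han))
      (sub_nonpos.2 (pow_le_one₀ hr h))
  · exact div_nonneg (sub_nonneg.2 (pow_le_pow_right₀ h han)) (sub_nonneg.2 (one_le_pow₀ h))

/-- In the notation of the threshold policies, `n = G - 1` and `a = s - 1`. -/
lemma threshold_value_sub_eq {r : ℝ} {n : ℕ} (hn : r ^ n ≠ 1) (hn1 : r ^ (n + 1) ≠ 1)
    (pF : ℝ) (a : ℕ) :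
    pF + (1 - pF) * (1 - r ^ a) / (1 - r ^ n) - (1 - r ^ (a + 1)) / (1 - r ^ (n + 1)) =
      (r ^ n - r ^ a) / (r ^ n - 1) * (pF - (1 - r) / (1 - r ^ (n + 1))) := by
  have h₁ : 1 - r ^ n ≠ 0 := sub_ne_zero.2 hn.symm
  have h₂ : r ^ n - 1 ≠ 0 := sub_ne_zero.2 hn
  have h₃ : 1 - r ^ (n + 1) ≠ 0 := sub_ne_zero.2 hn1.symm
  field_simp
  ring

theorem stmt_4_general (G : ℕ) (r : ℝ) (hr : 0 < r) (hr1 : r ≠ 1)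
    (pF : ℝ) :
    ∀ s, 1 ≤ s → s ≤ G - 1 →
      |(pF + (1 - pF) * (1 - r ^ (s - 1)) / (1 - r ^ (G - 1))) -
          (1 - r ^ s) / (1 - r ^ G)| =
        ((r ^ (G - 1) - r ^ (s - 1)) / (r ^ (G - 1) - 1)) *
          |pF - (1 - r) / (1 - r ^ G)| := by
  intro s hs hsG
  obtain ⟨a, rfl⟩ : ∃ a, s = a + 1 := ⟨s - 1, by omega⟩
  obtain ⟨n, rfl⟩ : ∃ n, G = n + 1 := ⟨G - 1, by omega⟩
  simp only [Nat.add_sub_cancel] at hsG ⊢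
  have hr_pow_ne_one {k : ℕ} (hk : k ≠ 0) : r ^ k ≠ 1 :=
    fun h => hr1 ((pow_eq_one_iff_of_nonneg hr.le hk).1 h)
  rw [threshold_value_sub_eq (hr_pow_ne_one (by omega)) (hr_pow_ne_one (by omega)), abs_mul,
    abs_of_nonneg (div_pow_sub_pow_sub_one_nonneg hr.le (by omega))]

theorem stmt_4 (G : ℕ) (hG : 2 ≤ G) (r : ℝ) (hr : 0 < r) (hr1 : r ≠ 1)
    (pF : ℝ) (hpF : 0 ≤ pF) (hpF1 : pF ≤ 1) :
    ∀ s, 1 ≤ s → s ≤ G - 1 →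
      |(pF + (1 - pF) * (1 - r ^ (s - 1)) / (1 - r ^ (G - 1))) -
          (1 - r ^ s) / (1 - r ^ G)| =
        ((r ^ (G - 1) - r ^ (s - 1)) / (r ^ (G - 1) - 1)) *
          |pF - (1 - r) / (1 - r ^ G)| :=
  stmt_4_general G r hr hr1 pF
end

section
/- Let G ≥ 2, p^C ∈ (0,1), r = (1-p^C)/p^C with r ≠ 1, and p^F ∈ (0,1). If p^F > (1-r)/(1-r^G), then p^F + (1-p^F)·(1-r^{s-1})/(1-r^{G-1}) ≥ (1-r^s)/(1-r^G) for all 1 ≤ s ≤ G-1; i.e., the threshold-1 policy value dominates the threshold-0 policy value at every state. -/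
theorem stmt_7 (G : ℕ) (hG : 2 ≤ G) (pC : ℝ) (hpC : 0 < pC) (hpC1 : pC < 1)
    (r : ℝ) (hr : r = (1 - pC) / pC) (hr1 : r ≠ 1)
    (pF : ℝ) (hpF : 0 < pF) (hpF1 : pF < 1)
    (hgt : pF > (1 - r) / (1 - r ^ G)) :
    ∀ s : ℕ, 1 ≤ s → s ≤ G - 1 →
      pF + (1 - pF) * (1 - r ^ (s - 1)) / (1 - r ^ (G - 1)) ≥
        (1 - r ^ s) / (1 - r ^ G) := by
  intro s hs1 hs2
  have hr0 : 0 < r := by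
    rw [hr]; exact div_pos (by linarith) hpC
  obtain ⟨k, rfl⟩ : ∃ k, s = k + 1 := ⟨s - 1, (Nat.succ_pred_eq_of_pos hs1).symm⟩
  obtain ⟨n, rfl⟩ : ∃ n, G = n + 2 := ⟨G - 2, by omega⟩
  have hk : k ≤ n := by omega
  rw [show k + 1 - 1 = k from rfl, show n + 2 - 1 = n + 1 from rfl]
  rcases lt_or_gt_of_ne hr1 with hlt | hgt1
  · -- r < 1
    have hB : (0:ℝ) < 1 - r ^ (n + 1) := by
      have : r ^ (n+1) < 1 := pow_lt_one₀ hr0.le hlt (by omega); linarith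
    have hA : (0:ℝ) < 1 - r ^ (n + 2) := by
      have : r ^ (n+2) < 1 := pow_lt_one₀ hr0.le hlt (by omega); linarith
    have key : pF + (1 - pF) * (1 - r ^ k) / (1 - r ^ (n + 1)) -
        (1 - r ^ (k + 1)) / (1 - r ^ (n + 2)) =
        (pF - (1 - r) / (1 - r ^ (n + 2))) * (1 - (1 - r ^ k) / (1 - r ^ (n + 1))) := by
      field_simp
      ring
    have h1 : 0 ≤ pF - (1 - r) / (1 - r ^ (n + 2)) := by linarith
    have h2 : (1 - r ^ k) / (1 - r ^ (n + 1)) ≤ 1 := by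
      rw [div_le_one hB]
      have := pow_le_pow_of_le_one hr0.le hlt.le (show k ≤ n + 1 by omega)
      linarith
    nlinarith [mul_nonneg h1 (by linarith : (0:ℝ) ≤ 1 - (1 - r ^ k) / (1 - r ^ (n + 1)))]
  · -- r > 1
    have hB : 1 - r ^ (n + 1) < 0 := by
      have : 1 < r ^ (n+1) := one_lt_pow₀ hgt1 (by omega); linarith
    have hA : 1 - r ^ (n + 2) < 0 := by
      have : 1 < r ^ (n+2) := one_lt_pow₀ hgt1 (by omega); linarith
    have key : pF + (1 - pF) * (1 - r ^ k) / (1 - r ^ (n + 1)) -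
        (1 - r ^ (k + 1)) / (1 - r ^ (n + 2)) =
        (pF - (1 - r) / (1 - r ^ (n + 2))) * (1 - (1 - r ^ k) / (1 - r ^ (n + 1))) := by
      have hB' : (1:ℝ) - r ^ (n + 1) ≠ 0 := ne_of_lt hB
      have hA' : (1:ℝ) - r ^ (n + 2) ≠ 0 := ne_of_lt hA
      field_simp
      ring
    have h1 : 0 ≤ pF - (1 - r) / (1 - r ^ (n + 2)) := by linarith
    have h2 : (1 - r ^ k) / (1 - r ^ (n + 1)) ≤ 1 := by
      rw [div_le_one_iff]
      right; right
      constructor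
      · exact hB
      · have := pow_le_pow_right₀ hgt1.le (show k ≤ n + 1 by omega)
        linarith
    nlinarith [mul_nonneg h1 (by linarith : (0:ℝ) ≤ 1 - (1 - r ^ k) / (1 - r ^ (n + 1)))]
end
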